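/- Let (Q,Ñ) be a classical solution of the relaxed system on [0,T) with Q ∈ C²([0,T)×[0,1]). Define H(τ,η) := ∂_ηQ(τ,η) − K(Q(τ,η)). Then H ∈ C¹([0,T)×[0,1]) and H satisfies, in the classical sense: ∂_τH(τ,η) + ∂_ηH(τ,η) = K'(Q(τ,η))·(H(τ,η) − H(τ,1)) for τ ∈ (0,T), η ∈ (0,1); H(τ,0) = H(τ,1) for τ ∈ (0,T); and H(0,η) = Q_init'(η) − K(Q_init(η)) for η ∈ [0,1]. Moreover Ñ(τ) = H(τ,1) = H(τ,0) for all τ ∈ [0,T). -/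

import Mathlib

open Real Set MeasureTheory Filter Topology
open scoped ENNReal

noncomputable section

/-- The time interval `[0, T)` in `ℝ`, where `T : ℝ≥0∞` may be `∞`. -/
def Ico0 (T : ℝ≥0∞) : Set ℝ := {τ : ℝ | 0 ≤ τ ∧ ENNReal.ofReal τ < T}

/-- Partial derivative in the time variable (one-sided at `τ = 0`). -/
def pdTau (Q : ℝ → ℝ → ℝ) (τ η : ℝ) : ℝ := derivWithin (fun s => Q s η) (Ici 0) τ

/-- Partial derivative in the spatial variable (one-sided at `η = 0` and `η = 1`). -/
def pdEta (Q : ℝ → ℝ → ℝ) (τ η : ℝ) : ℝ := derivWithin (fun x => Q τ x) (Icc 0 1) η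

/-- Assumption 1.1: `K ∈ C²(ℝ)` with `K'`, `K''` bounded on `ℝ` and `K > 0` on `[0, Φ_F]`. -/
structure KAssump (K : ℝ → ℝ) (ΦF : ℝ) : Prop where
  smooth : ContDiff ℝ 2 K
  bdd1 : ∃ C : ℝ, ∀ x : ℝ, |deriv K x| ≤ C
  bdd2 : ∃ C : ℝ, ∀ x : ℝ, |deriv (deriv K) x| ≤ C
  pos : ∀ φ ∈ Icc (0 : ℝ) ΦF, 0 < K φ

/-- `k_min := K'(0) + ∫₀^{Φ_F} min(K''(φ), 0) dφ`. -/
def kmin (K : ℝ → ℝ) (ΦF : ℝ) : ℝ :=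
  deriv K 0 + ∫ φ in (0 : ℝ)..ΦF, min (deriv (deriv K) φ) 0

/-- `k_max := K'(0) + ∫₀^{Φ_F} max(K''(φ), 0) dφ`. -/
def kmax (K : ℝ → ℝ) (ΦF : ℝ) : ℝ :=
  deriv K 0 + ∫ φ in (0 : ℝ)..ΦF, max (deriv (deriv K) φ) 0

/-- Assumption (A2) on the initial datum. -/
structure A2 (K : ℝ → ℝ) (ΦF : ℝ) (Qinit : ℝ → ℝ) : Prop where
  reg : ContDiffOn ℝ 1 Qinit (Icc 0 1)
  mono : MonotoneOn Qinit (Icc 0 1)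
  init0 : Qinit 0 = 0
  init1 : Qinit 1 = ΦF
  deriv1 : K ΦF < derivWithin Qinit (Icc 0 1) 1
  compat : derivWithin Qinit (Icc 0 1) 1 - derivWithin Qinit (Icc 0 1) 0 = K ΦF - K 0

/-- A classical solution `(Q, N)` of the Q-system on `[0, T)` with initial datum `Qinit`. -/
structure IsQSol (K : ℝ → ℝ) (ΦF : ℝ) (T : ℝ≥0∞) (Qinit : ℝ → ℝ)
    (Q : ℝ → ℝ → ℝ) (N : ℝ → ℝ) : Prop where
  initReg : ContDiffOn ℝ 1 Qinit (Icc 0 1)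
  initMono : MonotoneOn Qinit (Icc 0 1)
  init0 : Qinit 0 = 0
  init1 : Qinit 1 = ΦF
  initDeriv : K ΦF < derivWithin Qinit (Icc 0 1) 1
  reg : ContDiffOn ℝ 1 (Function.uncurry Q) (Ico0 T ×ˢ Icc (0 : ℝ) 1)
  mono : ∀ τ ∈ Ico0 T, MonotoneOn (Q τ) (Icc 0 1)
  Ncont : ContinuousOn N (Ico0 T)
  Npos : ∀ τ ∈ Ico0 T, 0 < N τ
  pde : ∀ τ ∈ Ico0 T, ∀ η ∈ Ioo (0 : ℝ) 1,
    pdTau Q τ η + pdEta Q τ η = 1 / N τ + K (Q τ η)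
  bc : ∀ τ ∈ Ico0 T, Q τ 0 = 0
  Ndef : ∀ τ ∈ Ico0 T, 1 / N τ = pdEta Q τ 1 - K ΦF
  init : ∀ η ∈ Icc (0 : ℝ) 1, Q 0 η = Qinit η
  constraint : ∀ τ ∈ Ico0 T, K ΦF < pdEta Q τ 1

/-- A classical solution `(Q, Ñ)` of the relaxed system on `[0, T)` with initial datum `Qinit`,
where `Ñ` is unconstrained in sign. -/
structure IsRelaxedSol (K : ℝ → ℝ) (ΦF : ℝ) (T : ℝ≥0∞) (Qinit : ℝ → ℝ)
    (Q : ℝ → ℝ → ℝ) (Ntil : ℝ → ℝ) : Prop where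
  initReg : ContDiffOn ℝ 1 Qinit (Icc 0 1)
  init0 : Qinit 0 = 0
  init1 : Qinit 1 = ΦF
  reg : ContDiffOn ℝ 1 (Function.uncurry Q) (Ico0 T ×ˢ Icc (0 : ℝ) 1)
  Ncont : ContinuousOn Ntil (Ico0 T)
  pde : ∀ τ ∈ Ico0 T, ∀ η ∈ Ioo (0 : ℝ) 1,
    pdTau Q τ η + pdEta Q τ η = Ntil τ + K (Q τ η)
  bc : ∀ τ ∈ Ico0 T, Q τ 0 = 0
  Ndef : ∀ τ ∈ Ico0 T, Ntil τ = pdEta Q τ 1 - K ΦF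
  init : ∀ η ∈ Icc (0 : ℝ) 1, Q 0 η = Qinit η

/-- A steady state `(Q*, N*)` of the Q-system. -/
def IsSteadyState (K : ℝ → ℝ) (ΦF : ℝ) (Qs : ℝ → ℝ) (Ns : ℝ) : Prop :=
  ContDiffOn ℝ 1 Qs (Icc 0 1) ∧ 0 < Ns ∧
    (∀ η ∈ Icc (0 : ℝ) 1, derivWithin Qs (Icc 0 1) η = K (Qs η) + 1 / Ns) ∧
    Qs 0 = 0 ∧ Qs 1 = ΦF

/-- `P₀ f := f - ∫₀¹ f`. -/
def P0 (f : ℝ → ℝ) (η : ℝ) : ℝ := f η - ∫ x in (0 : ℝ)..1, f x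

/-- `H_init := Q_init' - K ∘ Q_init` (derivative within `[0,1]`). -/
def Hinit (K : ℝ → ℝ) (Qinit : ℝ → ℝ) (η : ℝ) : ℝ :=
  derivWithin Qinit (Icc 0 1) η - K (Qinit η)

/-! Differentiating the PDE in `η` and using the symmetry of the second derivative of the `C²`
function `Q` shows that `H = ∂_ηQ - K(Q)` satisfies `∂_τH + ∂_ηH = K'(Q) (H - Ñ)`. On the boundary,
`Q(τ,0) = 0` forces `∂_τQ(τ,0) = 0`, so the PDE, extended to `η = 0` by continuity, gives
`H(τ,0) = Ñ(τ)`. At `η = 1` the PDE and the definition of `Ñ` give the autonomous ODE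
`∂_τQ(τ,1) = K(Q(τ,1)) - K(Φ_F)`; since `K` is Lipschitz and `Q(0,1) = Φ_F` is an equilibrium,
`Q(τ,1) = Φ_F` for all `τ`, whence `H(τ,1) = Ñ(τ)`. -/

open scoped NNReal

lemma isOpen_setOf_ofReal_lt (T : ℝ≥0∞) : IsOpen {τ : ℝ | ENNReal.ofReal τ < T} :=
  isOpen_Iio.preimage ENNReal.continuous_ofReal

lemma Ico0_eq_Ici_inter (T : ℝ≥0∞) : Ico0 T = Ici 0 ∩ {τ : ℝ | ENNReal.ofReal τ < T} := rfl

lemma uniqueDiffOn_Ico0 (T : ℝ≥0∞) : UniqueDiffOn ℝ (Ico0 T) := by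
  rw [Ico0_eq_Ici_inter]
  exact (uniqueDiffOn_Ici 0).inter (isOpen_setOf_ofReal_lt T)

lemma Ico0_mem_nhdsWithin_Ici {T : ℝ≥0∞} {τ : ℝ} (hτ : τ ∈ Ico0 T) :
    Ico0 T ∈ 𝓝[Ici 0] τ := by
  rw [Ico0_eq_Ici_inter]
  exact inter_mem_nhdsWithin _ ((isOpen_setOf_ofReal_lt T).mem_nhds hτ.2)

lemma Ico0_mem_nhds {T : ℝ≥0∞} {τ : ℝ} (hτ : τ ∈ Ico0 T) (hτ0 : 0 < τ) : Ico0 T ∈ 𝓝 τ :=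
  inter_mem (Ici_mem_nhds hτ0) ((isOpen_setOf_ofReal_lt T).mem_nhds hτ.2)

lemma Icc_subset_Ico0 {T : ℝ≥0∞} {τ : ℝ} (hτ : τ ∈ Ico0 T) : Icc 0 τ ⊆ Ico0 T :=
  fun _ ht => ⟨ht.1, (ENNReal.ofReal_le_ofReal ht.2).trans_lt hτ.2⟩

section Slices

variable {F : Type*} [NormedAddCommGroup F] [NormedSpace ℝ F] {f : ℝ × ℝ → F}
  {f' : ℝ × ℝ →L[ℝ] F} {a b : ℝ}

lemma HasFDerivWithinAt.hasDerivWithinAt_slice_fst {s t : Set ℝ}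
    (h : HasFDerivWithinAt f f' (s ×ˢ t) (a, b)) (hb : b ∈ t) :
    HasDerivWithinAt (fun x => f (x, b)) (f' (1, 0)) s a :=
  h.comp_hasDerivWithinAt a ((hasDerivAt_id a).prodMk (hasDerivAt_const a b)).hasDerivWithinAt
    fun _ hx => mk_mem_prod hx hb

lemma HasFDerivWithinAt.hasDerivWithinAt_slice_snd {s t : Set ℝ}
    (h : HasFDerivWithinAt f f' (s ×ˢ t) (a, b)) (ha : a ∈ s) :
    HasDerivWithinAt (fun y => f (a, y)) (f' (0, 1)) t b :=
  h.comp_hasDerivWithinAt b ((hasDerivAt_const b a).prodMk (hasDerivAt_id b)).hasDerivWithinAt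
    fun _ hy => mk_mem_prod ha hy

lemma HasFDerivAt.hasDerivAt_slice_fst (h : HasFDerivAt f f' (a, b)) :
    HasDerivAt (fun x => f (x, b)) (f' (1, 0)) a :=
  h.comp_hasDerivAt a ((hasDerivAt_id a).prodMk (hasDerivAt_const a b))

lemma HasFDerivAt.hasDerivAt_slice_snd (h : HasFDerivAt f f' (a, b)) :
    HasDerivAt (fun y => f (a, y)) (f' (0, 1)) b :=
  h.comp_hasDerivAt b ((hasDerivAt_const b a).prodMk (hasDerivAt_id b))

end Slices

section PartialDerivatives

variable {Q : ℝ → ℝ → ℝ} {L : ℝ × ℝ →L[ℝ] ℝ} {τ η : ℝ}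

lemma pdTau_eq_deriv (hτ : 0 < τ) : pdTau Q τ η = deriv (fun s => Q s η) τ :=
  derivWithin_of_mem_nhds (Ici_mem_nhds hτ)

lemma pdEta_eq_deriv (hη : η ∈ Ioo (0 : ℝ) 1) : pdEta Q τ η = deriv (Q τ) η :=
  derivWithin_of_mem_nhds (Icc_mem_nhds hη.1 hη.2)

lemma pdEta_eq_of_hasFDerivWithinAt {s : Set ℝ}
    (h : HasFDerivWithinAt (Function.uncurry Q) L (s ×ˢ Icc 0 1) (τ, η))
    (hτ : τ ∈ s) (hη : η ∈ Icc (0 : ℝ) 1) : pdEta Q τ η = L (0, 1) :=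
  (h.hasDerivWithinAt_slice_snd hτ).derivWithin (uniqueDiffOn_Icc zero_lt_one η hη)

lemma pdTau_eq_of_hasFDerivWithinAt {T : ℝ≥0∞}
    (h : HasFDerivWithinAt (Function.uncurry Q) L (Ico0 T ×ˢ Icc 0 1) (τ, η))
    (hτ : τ ∈ Ico0 T) (hη : η ∈ Icc (0 : ℝ) 1) : pdTau Q τ η = L (1, 0) :=
  ((h.hasDerivWithinAt_slice_fst hη).mono_of_mem_nhdsWithin
    (Ico0_mem_nhdsWithin_Ici hτ)).derivWithin (uniqueDiffOn_Ici 0 τ hτ.1)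

lemma hasDerivWithinAt_pdTau {T : ℝ≥0∞}
    (hQ : ContDiffOn ℝ 1 (Function.uncurry Q) (Ico0 T ×ˢ Icc 0 1))
    (hτ : τ ∈ Ico0 T) (hη : η ∈ Icc (0 : ℝ) 1) :
    HasDerivWithinAt (fun s => Q s η) (pdTau Q τ η) (Ici 0) τ := by
  have hd := (hQ.differentiableOn one_ne_zero _ (mk_mem_prod hτ hη)).hasFDerivWithinAt
  exact ((hd.hasDerivWithinAt_slice_fst hη).mono_of_mem_nhdsWithin
    (Ico0_mem_nhdsWithin_Ici hτ)).differentiableWithinAt.hasDerivWithinAt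

lemma contDiffOn_uncurry_pdEta {s : Set ℝ} (hs : UniqueDiffOn ℝ s) {m n : WithTop ℕ∞}
    (hQ : ContDiffOn ℝ n (Function.uncurry Q) (s ×ˢ Icc 0 1)) (hmn : m + 1 ≤ n) :
    ContDiffOn ℝ m (Function.uncurry (pdEta Q)) (s ×ˢ Icc 0 1) := by
  refine ((hQ.fderivWithin (hs.prod (uniqueDiffOn_Icc zero_lt_one)) hmn).clm_apply
    (contDiffOn_const (c := ((0 : ℝ), (1 : ℝ))))).congr ?_
  rintro ⟨τ, η⟩ ⟨hτ, hη⟩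
  exact pdEta_eq_of_hasFDerivWithinAt ((hQ.differentiableOn
    (zero_lt_one.trans_le (le_add_self.trans hmn)).ne' _ ⟨hτ, hη⟩).hasFDerivWithinAt) hτ hη

lemma contDiffOn_uncurry_pdTau {T : ℝ≥0∞} {m n : WithTop ℕ∞}
    (hQ : ContDiffOn ℝ n (Function.uncurry Q) (Ico0 T ×ˢ Icc 0 1)) (hmn : m + 1 ≤ n) :
    ContDiffOn ℝ m (Function.uncurry (pdTau Q)) (Ico0 T ×ˢ Icc 0 1) := by
  refine ((hQ.fderivWithin ((uniqueDiffOn_Ico0 T).prod (uniqueDiffOn_Icc zero_lt_one))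
    hmn).clm_apply (contDiffOn_const (c := ((1 : ℝ), (0 : ℝ))))).congr ?_
  rintro ⟨τ, η⟩ ⟨hτ, hη⟩
  exact pdTau_eq_of_hasFDerivWithinAt ((hQ.differentiableOn
    (zero_lt_one.trans_le (le_add_self.trans hmn)).ne' _ ⟨hτ, hη⟩).hasFDerivWithinAt) hτ hη

end PartialDerivatives

lemma deriv_slice_add_deriv_slice_of_transport {G : ℝ × ℝ → ℝ} {K : ℝ → ℝ}
    {a b n : ℝ}
    (hG : ContDiffAt ℝ 2 G (a, b)) (hK : DifferentiableAt ℝ K (G (a, b)))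
    (hpde : ∀ᶠ y in 𝓝 b,
      fderiv ℝ G (a, y) (1, 0) + fderiv ℝ G (a, y) (0, 1) = n + K (G (a, y))) :
    deriv (fun x => fderiv ℝ G (x, b) (0, 1) - K (G (x, b))) a
      + deriv (fun y => fderiv ℝ G (a, y) (0, 1) - K (G (a, y))) b
      = deriv K (G (a, b)) * (fderiv ℝ G (a, b) (0, 1) - K (G (a, b)) - n) := by
  set L := fderiv ℝ G (a, b)
  set M := fderiv ℝ (fderiv ℝ G) (a, b)
  have hL : HasFDerivAt G L (a, b) := (hG.differentiableAt two_ne_zero).hasFDerivAt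
  have hM : HasFDerivAt (fderiv ℝ G) M (a, b) :=
    ((hG.fderiv_right (m := 1) le_rfl).differentiableAt one_ne_zero).hasFDerivAt
  have hM₁ : ∀ v, HasDerivAt (fun x => fderiv ℝ G (x, b) v) (M (1, 0) v) a := fun v => by
    simpa using hM.hasDerivAt_slice_fst.clm_apply (hasDerivAt_const a v)
  have hM₂ : ∀ v, HasDerivAt (fun y => fderiv ℝ G (a, y) v) (M (0, 1) v) b := fun v => by
    simpa using hM.hasDerivAt_slice_snd.clm_apply (hasDerivAt_const b v)
  have hKG₁ := hK.hasDerivAt.comp a hL.hasDerivAt_slice_fst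
  have hKG₂ := hK.hasDerivAt.comp b hL.hasDerivAt_slice_snd
  have hpde_deriv : M (0, 1) (1, 0) + M (0, 1) (0, 1) = deriv K (G (a, b)) * L (0, 1) := by
    simpa using ((hM₂ _).add (hM₂ _)).unique
      (((hasDerivAt_const b n).add hKG₂).congr_of_eventuallyEq hpde)
  have hsym : M (1, 0) (0, 1) = M (0, 1) (1, 0) :=
    hG.isSymmSndFDerivAt (by simp) _ _
  have hp : L (1, 0) + L (0, 1) = n + K (G (a, b)) := hpde.self_of_nhds
  have hH₁ : HasDerivAt (fun x => fderiv ℝ G (x, b) (0, 1) - K (G (x, b)))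
      (M (1, 0) (0, 1) - deriv K (G (a, b)) * L (1, 0)) a := (hM₁ _).sub hKG₁
  have hH₂ : HasDerivAt (fun y => fderiv ℝ G (a, y) (0, 1) - K (G (a, y)))
      (M (0, 1) (0, 1) - deriv K (G (a, b)) * L (0, 1)) b := (hM₂ _).sub hKG₂
  rw [hH₁.deriv, hH₂.deriv]
  linear_combination hsym + hpde_deriv - deriv K (G (a, b)) * hp

lemma LipschitzWith.eq_of_hasDerivWithinAt_sub {E : Type*} [NormedAddCommGroup E]
    [NormedSpace ℝ E] {v : E → E} {C : ℝ≥0} (hv : LipschitzWith C v) {f : ℝ → E} {a b : ℝ}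
    {c : E} (hab : a ≤ b) (hf : ContinuousOn f (Icc a b))
    (hf' : ∀ t ∈ Ico a b, HasDerivWithinAt f (v (f t) - v c) (Ici t) t) (ha : f a = c) :
    f b = c :=
  ODE_solution_unique (v := fun _ x => v x - v c) (fun _ => hv.sub (LipschitzWith.const (v c)))
    hf hf' continuousOn_const (fun t _ => by simpa using hasDerivWithinAt_const t (Ici t) c) ha
    ⟨hab, le_rfl⟩

lemma KAssump.exists_lipschitzWith {K : ℝ → ℝ} {ΦF : ℝ} (hK : KAssump K ΦF) :
    ∃ C, LipschitzWith C K := by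
  obtain ⟨C, hC⟩ := hK.bdd1
  refine ⟨C.toNNReal, lipschitzWith_of_nnnorm_deriv_le (hK.smooth.differentiable two_ne_zero)
    fun x => ?_⟩
  rw [← NNReal.coe_le_coe, coe_nnnorm, Real.norm_eq_abs, Real.coe_toNNReal']
  exact le_max_of_le_left (hC x)

namespace IsRelaxedSol

variable {K : ℝ → ℝ} {ΦF : ℝ} {T : ℝ≥0∞} {Qinit : ℝ → ℝ} {Q : ℝ → ℝ → ℝ} {Ntil : ℝ → ℝ}
  {τ : ℝ}

lemma pde_Icc (hsol : IsRelaxedSol K ΦF T Qinit Q Ntil) (hK : Continuous K)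
    (hτ : τ ∈ Ico0 T) :
    EqOn (fun η => pdTau Q τ η + pdEta Q τ η) (fun η => Ntil τ + K (Q τ η)) (Icc 0 1) := by
  have hTau := (contDiffOn_uncurry_pdTau hsol.reg (m := 0) (by simp)).continuousOn
  have hEta := (contDiffOn_uncurry_pdEta (uniqueDiffOn_Ico0 T) hsol.reg (m := 0)
    (by simp)).continuousOn
  exact EqOn.of_subset_closure (hsol.pde τ hτ)
    ((hTau.uncurry_left τ hτ).add (hEta.uncurry_left τ hτ))
    (continuousOn_const.add (hK.comp_continuousOn (hsol.reg.continuousOn.uncurry_left τ hτ)))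
    Ioo_subset_Icc_self (closure_Ioo zero_ne_one).ge

lemma pdTau_zero (hsol : IsRelaxedSol K ΦF T Qinit Q Ntil) (hτ : τ ∈ Ico0 T) :
    pdTau Q τ 0 = 0 := by
  have h : HasDerivWithinAt (fun s => Q s 0) 0 (Ico0 T) τ :=
    (hasDerivWithinAt_const τ _ 0).congr (fun s hs => hsol.bc s hs) (hsol.bc τ hτ)
  exact (h.mono_of_mem_nhdsWithin (Ico0_mem_nhdsWithin_Ici hτ)).derivWithin
    (uniqueDiffOn_Ici 0 τ hτ.1)

lemma pdEta_sub_at_zero_eq (hsol : IsRelaxedSol K ΦF T Qinit Q Ntil) (hK : Continuous K)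
    (hτ : τ ∈ Ico0 T) : pdEta Q τ 0 - K (Q τ 0) = Ntil τ := by
  have h := hsol.pde_Icc hK hτ (left_mem_Icc.2 zero_le_one)
  simp only [hsol.pdTau_zero hτ, zero_add] at h
  linarith

lemma pdTau_one (hsol : IsRelaxedSol K ΦF T Qinit Q Ntil) (hK : Continuous K)
    (hτ : τ ∈ Ico0 T) : pdTau Q τ 1 = K (Q τ 1) - K ΦF := by
  have h := hsol.pde_Icc hK hτ (right_mem_Icc.2 zero_le_one)
  have hN := hsol.Ndef τ hτ
  simp only at h
  linarith

lemma Q_one_eq (hsol : IsRelaxedSol K ΦF T Qinit Q Ntil) {C : ℝ≥0} (hK : LipschitzWith C K)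
    (hτ : τ ∈ Ico0 T) : Q τ 1 = ΦF := by
  have h1 : (1 : ℝ) ∈ Icc (0 : ℝ) 1 := right_mem_Icc.2 zero_le_one
  refine hK.eq_of_hasDerivWithinAt_sub (f := fun s => Q s 1) hτ.1
    ((hsol.reg.continuousOn.uncurry_right 1 h1).mono (Icc_subset_Ico0 hτ)) (fun t ht => ?_)
    ((hsol.init 1 h1).trans hsol.init1)
  have ht' := Icc_subset_Ico0 hτ (Ico_subset_Icc_self ht)
  rw [← hsol.pdTau_one hK.continuous ht']
  exact (hasDerivWithinAt_pdTau hsol.reg ht' h1).mono (Ici_subset_Ici.2 ht.1)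

lemma pdEta_sub_at_one_eq (hsol : IsRelaxedSol K ΦF T Qinit Q Ntil) {C : ℝ≥0}
    (hK : LipschitzWith C K) (hτ : τ ∈ Ico0 T) : pdEta Q τ 1 - K (Q τ 1) = Ntil τ := by
  rw [hsol.Q_one_eq hK hτ, hsol.Ndef τ hτ]

lemma transport_pdEta_sub (hsol : IsRelaxedSol K ΦF T Qinit Q Ntil) (hK : Differentiable ℝ K)
    (hQ : ContDiffOn ℝ 2 (Function.uncurry Q) (Ico0 T ×ˢ Icc (0 : ℝ) 1)) (hτ : τ ∈ Ico0 T)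
    (hτ0 : 0 < τ) {η : ℝ} (hη : η ∈ Ioo (0 : ℝ) 1) :
    pdTau (fun s x => pdEta Q s x - K (Q s x)) τ η
      + pdEta (fun s x => pdEta Q s x - K (Q s x)) τ η
      = deriv K (Q τ η) * (pdEta Q τ η - K (Q τ η) - Ntil τ) := by
  set G := Function.uncurry Q
  have hG : ∀ s ∈ Ico0 T, 0 < s → ∀ x ∈ Ioo (0 : ℝ) 1, ContDiffAt ℝ 2 G (s, x) :=
    fun s hs hs0 x hx =>
      hQ.contDiffAt (prod_mem_nhds (Ico0_mem_nhds hs hs0) (Icc_mem_nhds hx.1 hx.2))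
  have hpd : ∀ s ∈ Ico0 T, 0 < s → ∀ x ∈ Ioo (0 : ℝ) 1,
      pdTau Q s x = fderiv ℝ G (s, x) (1, 0) ∧ pdEta Q s x = fderiv ℝ G (s, x) (0, 1) := by
    intro s hs hs0 x hx
    have hd : HasFDerivWithinAt G (fderiv ℝ G (s, x)) (Ico0 T ×ˢ Icc 0 1) (s, x) :=
      ((hG s hs hs0 x hx).differentiableAt two_ne_zero).hasFDerivAt.hasFDerivWithinAt
    exact ⟨pdTau_eq_of_hasFDerivWithinAt hd hs (Ioo_subset_Icc_self hx),
      pdEta_eq_of_hasFDerivWithinAt hd hs (Ioo_subset_Icc_self hx)⟩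
  have hτnhds : Ico0 T ∩ Ioi 0 ∈ 𝓝 τ := inter_mem (Ico0_mem_nhds hτ hτ0) (Ioi_mem_nhds hτ0)
  have hηnhds : Ioo (0 : ℝ) 1 ∈ 𝓝 η := Ioo_mem_nhds hη.1 hη.2
  have hslice₁ : deriv (fun s => pdEta Q s η - K (Q s η)) τ
      = deriv (fun s => fderiv ℝ G (s, η) (0, 1) - K (G (s, η))) τ := by
    refine EventuallyEq.deriv_eq ?_
    filter_upwards [hτnhds] with s hs
    rw [(hpd s hs.1 hs.2 η hη).2]
    rfl
  have hslice₂ : deriv (fun x => pdEta Q τ x - K (Q τ x)) η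
      = deriv (fun x => fderiv ℝ G (τ, x) (0, 1) - K (G (τ, x))) η := by
    refine EventuallyEq.deriv_eq ?_
    filter_upwards [hηnhds] with x hx
    rw [(hpd τ hτ hτ0 x hx).2]
    rfl
  rw [pdTau_eq_deriv hτ0, pdEta_eq_deriv (Q := fun s x => pdEta Q s x - K (Q s x)) hη,
    hslice₁, hslice₂, (hpd τ hτ hτ0 η hη).2]
  refine deriv_slice_add_deriv_slice_of_transport (hG τ hτ hτ0 η hη) (hK _) ?_
  filter_upwards [hηnhds] with x hx
  rw [← (hpd τ hτ hτ0 x hx).1, ← (hpd τ hτ hτ0 x hx).2]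
  exact hsol.pde τ hτ x hx

end IsRelaxedSol

theorem stmt11_general (ΦF : ℝ) (K : ℝ → ℝ) (hK : KAssump K ΦF)
    (T : ℝ≥0∞) (Qinit : ℝ → ℝ) (Q : ℝ → ℝ → ℝ) (Ntil : ℝ → ℝ)
    (hsol : IsRelaxedSol K ΦF T Qinit Q Ntil)
    (hreg2 : ContDiffOn ℝ 2 (Function.uncurry Q) (Ico0 T ×ˢ Icc (0 : ℝ) 1))
    (H : ℝ → ℝ → ℝ) (hH : ∀ τ η : ℝ, H τ η = pdEta Q τ η - K (Q τ η)) :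
    ContDiffOn ℝ 1 (Function.uncurry H) (Ico0 T ×ˢ Icc (0 : ℝ) 1) ∧
    (∀ τ ∈ Ico0 T, 0 < τ → ∀ η ∈ Ioo (0 : ℝ) 1,
      pdTau H τ η + pdEta H τ η = deriv K (Q τ η) * (H τ η - H τ 1)) ∧
    (∀ τ ∈ Ico0 T, 0 < τ → H τ 0 = H τ 1) ∧
    (∀ η ∈ Icc (0 : ℝ) 1, H 0 η = derivWithin Qinit (Icc 0 1) η - K (Qinit η)) ∧
    (∀ τ ∈ Ico0 T, Ntil τ = H τ 1 ∧ H τ 1 = H τ 0) := by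
  obtain rfl : H = fun τ η => pdEta Q τ η - K (Q τ η) := funext₂ hH
  obtain ⟨C, hKlip⟩ := hK.exists_lipschitzWith
  have hKc : Continuous K := hKlip.continuous
  have hH1 : ∀ τ ∈ Ico0 T, pdEta Q τ 1 - K (Q τ 1) = Ntil τ := fun τ hτ =>
    hsol.pdEta_sub_at_one_eq hKlip hτ
  have hH0 : ∀ τ ∈ Ico0 T, pdEta Q τ 0 - K (Q τ 0) = Ntil τ := fun τ hτ =>
    hsol.pdEta_sub_at_zero_eq hKc hτ
  refine ⟨?_, fun τ hτ hτ0 η hη => ?_, fun τ hτ _ => ?_, fun η hη => ?_,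
    fun τ hτ => ⟨(hH1 τ hτ).symm, (hH1 τ hτ).trans (hH0 τ hτ).symm⟩⟩
  · exact (contDiffOn_uncurry_pdEta (uniqueDiffOn_Ico0 T) hreg2 le_rfl).sub
      ((hK.smooth.of_le one_le_two).comp_contDiffOn (hreg2.of_le one_le_two))
  · dsimp only
    rw [hsol.transport_pdEta_sub (hK.smooth.differentiable two_ne_zero) hreg2 hτ hτ0 hη,
      hH1 τ hτ]
  · exact (hH0 τ hτ).trans (hH1 τ hτ).symm
  · dsimp only
    rw [pdEta, derivWithin_congr hsol.init (hsol.init η hη), hsol.init η hη]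

/-- Proposition 5.2: the equation satisfied by the auxiliary quantity
`H = ∂_ηQ - K(Q)` for a `C²` classical solution of the relaxed system. -/
theorem stmt11 (ΦF : ℝ) (hΦF : 0 < ΦF) (K : ℝ → ℝ) (hK : KAssump K ΦF)
    (T : ℝ≥0∞) (hT : 0 < T) (Qinit : ℝ → ℝ) (Q : ℝ → ℝ → ℝ) (Ntil : ℝ → ℝ)
    (hsol : IsRelaxedSol K ΦF T Qinit Q Ntil)
    (hreg2 : ContDiffOn ℝ 2 (Function.uncurry Q) (Ico0 T ×ˢ Icc (0 : ℝ) 1))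
    (H : ℝ → ℝ → ℝ) (hH : ∀ τ η : ℝ, H τ η = pdEta Q τ η - K (Q τ η)) :
    ContDiffOn ℝ 1 (Function.uncurry H) (Ico0 T ×ˢ Icc (0 : ℝ) 1) ∧
    (∀ τ ∈ Ico0 T, 0 < τ → ∀ η ∈ Ioo (0 : ℝ) 1,
      pdTau H τ η + pdEta H τ η = deriv K (Q τ η) * (H τ η - H τ 1)) ∧
    (∀ τ ∈ Ico0 T, 0 < τ → H τ 0 = H τ 1) ∧
    (∀ η ∈ Icc (0 : ℝ) 1, H 0 η = derivWithin Qinit (Icc 0 1) η - K (Qinit η)) ∧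
    (∀ τ ∈ Ico0 T, Ntil τ = H τ 1 ∧ H τ 1 = H τ 0) :=
  stmt11_general ΦF K hK T Qinit Q Ntil hsol hreg2 H hH
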